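/- Let x₁, …, x_k be real numbers in (0, M] with x_j = M for at least one j and x_i < M for at least one i, and fix γ < −1. Define ℓ_{γ,σ}(x) = −log σ − (1/γ + 1) log(1 + γx/σ) whenever 1 + γx/σ > 0. Then lim_{σ → (−γM)^+} Σ_{i=1}^k ℓ_{γ,σ}(x_i) = +∞; in particular the independence GP log-likelihood is unbounded above on the parameter region {γ < −1}. -/
import Mathlib

open Filter Real

/-- The GP log-density of a single observation. -/
noncomputable def gpLogLik (γ σ x : ℝ) : ℝ :=
  -Real.log σ - (1 / γ + 1) * Real.log (1 + γ * x / σ)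

theorem gp_loglik_unbounded (k : ℕ) (x : Fin k → ℝ) (M γ : ℝ) (hγ : γ < -1)
    (hpos : ∀ i, 0 < x i) (hle : ∀ i, x i ≤ M)
    (hmax : ∃ j, x j = M) (hlt : ∃ i, x i < M) :
    Filter.Tendsto (fun σ : ℝ => ∑ i, gpLogLik γ σ (x i))
      (nhdsWithin (-γ * M) (Set.Ioi (-γ * M))) Filter.atTop := by
  obtain ⟨j, hj⟩ := hmax
  have hM : 0 < M := lt_of_lt_of_le (hpos j) (hle j)
  have hγ0 : γ < 0 := by linarith
  set σ₀ : ℝ := -γ * M with hσ₀def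
  have hσ₀ : 0 < σ₀ := mul_pos (by linarith) hM
  have hcoef : 0 < 1 / γ + 1 := by
    have h1 : (-1 : ℝ) < 1 / γ := by
      rw [lt_div_iff_of_neg hγ0]; linarith
    linarith
  set c : ℝ := -Real.log (σ₀ + 1) with hc
  have hmem : Set.Ioo σ₀ (σ₀ + 1) ∈ nhdsWithin σ₀ (Set.Ioi σ₀) :=
    Ioo_mem_nhdsGT_of_mem ⟨le_refl _, by linarith⟩
  -- each term is ≥ c on the interval
  have key : ∀ σ ∈ Set.Ioo σ₀ (σ₀ + 1), ∀ i, c ≤ gpLogLik γ σ (x i) := by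
    intro σ hσ i
    have hσpos : 0 < σ := hσ₀.trans hσ.1
    have harg_pos : 0 < 1 + γ * x i / σ := by
      have h1 : 0 < σ + γ * x i := by
        nlinarith [mul_nonneg (le_of_lt (show (0:ℝ) < -γ by linarith))
          (sub_nonneg.2 (hle i)), hσ.1]
      have h2 : 1 + γ * x i / σ = (σ + γ * x i) / σ := by field_simp
      rw [h2]; exact div_pos h1 hσpos
    have harg_le : 1 + γ * x i / σ ≤ 1 := by
      have : γ * x i / σ ≤ 0 :=
        div_nonpos_of_nonpos_of_nonneg (mul_neg_of_neg_of_pos hγ0 (hpos i)).le hσpos.le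
      linarith
    have hlog_nonpos : Real.log (1 + γ * x i / σ) ≤ 0 :=
      Real.log_nonpos (le_of_lt harg_pos) harg_le
    have h2 : (1 / γ + 1) * Real.log (1 + γ * x i / σ) ≤ 0 :=
      mul_nonpos_of_nonneg_of_nonpos hcoef.le hlog_nonpos
    have h3 : Real.log σ ≤ Real.log (σ₀ + 1) :=
      Real.log_le_log hσpos (by linarith [hσ.2])
    simp only [gpLogLik, hc]
    linarith
  -- the term at index j tends to atTop
  have hj_top : Tendsto (fun σ : ℝ => gpLogLik γ σ (x j))
      (nhdsWithin σ₀ (Set.Ioi σ₀)) atTop := by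
    rw [hj]
    have harg : Tendsto (fun σ : ℝ => 1 + γ * M / σ)
        (nhdsWithin σ₀ (Set.Ioi σ₀)) (nhdsWithin 0 (Set.Ioi 0)) := by
      rw [tendsto_nhdsWithin_iff]
      constructor
      · have hval : 1 + γ * M / σ₀ = 0 := by
          have h : γ * M ≠ 0 := (mul_neg_of_neg_of_pos hγ0 hM).ne
          show 1 + γ * M / (-γ * M) = 0
          rw [neg_mul, div_neg, div_self h]; ring
        have hcont : Tendsto (fun σ : ℝ => 1 + γ * M / σ) (nhds σ₀)
            (nhds (1 + γ * M / σ₀)) := by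
          apply Tendsto.const_add
          exact (tendsto_const_nhds.div tendsto_id hσ₀.ne').comp tendsto_id
        rw [hval] at hcont
        exact hcont.mono_left nhdsWithin_le_nhds
      · filter_upwards [self_mem_nhdsWithin] with σ hσ
        have hσpos : 0 < σ := hσ₀.trans hσ
        have h1 : 0 < σ + γ * M := by
          have hσ' : -γ * M < σ := hσ
          linarith
        have h2 : 1 + γ * M / σ = (σ + γ * M) / σ := by field_simp
        rw [Set.mem_Ioi, h2]
        exact div_pos h1 hσpos
    have hlog : Tendsto (fun σ : ℝ => Real.log (1 + γ * M / σ))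
        (nhdsWithin σ₀ (Set.Ioi σ₀)) atBot :=
      Real.tendsto_log_nhdsGT_zero.comp harg
    have hmul : Tendsto (fun σ : ℝ => -(1 / γ + 1) * Real.log (1 + γ * M / σ))
        (nhdsWithin σ₀ (Set.Ioi σ₀)) atTop :=
      (tendsto_const_mul_atTop_of_neg (by linarith)).2 hlog
    have hlogσ : Tendsto (fun σ : ℝ => -Real.log σ) (nhdsWithin σ₀ (Set.Ioi σ₀))
        (nhds (-Real.log σ₀)) :=
      ((Real.continuousAt_log hσ₀.ne').neg.tendsto).mono_left nhdsWithin_le_nhds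
    have := hlogσ.add_atTop hmul
    refine this.congr fun σ => ?_
    simp [gpLogLik]; ring
  -- combine: the sum is bounded below by the j-term plus a constant
  set D : ℝ := ((Finset.univ.erase j).card : ℝ) * c with hD
  have hbound : ∀ᶠ σ in nhdsWithin σ₀ (Set.Ioi σ₀),
      gpLogLik γ σ (x j) + D ≤ ∑ i, gpLogLik γ σ (x i) := by
    filter_upwards [hmem] with σ hσ
    have hsplit : ∑ i, gpLogLik γ σ (x i)
        = gpLogLik γ σ (x j) + ∑ i ∈ Finset.univ.erase j, gpLogLik γ σ (x i) :=
      (Finset.add_sum_erase _ _ (Finset.mem_univ j)).symm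
    rw [hsplit]
    have : D ≤ ∑ i ∈ Finset.univ.erase j, gpLogLik γ σ (x i) := by
      rw [hD]
      calc ((Finset.univ.erase j).card : ℝ) * c
          = ∑ _i ∈ Finset.univ.erase j, c := by
            rw [Finset.sum_const, nsmul_eq_mul]
        _ ≤ ∑ i ∈ Finset.univ.erase j, gpLogLik γ σ (x i) :=
            Finset.sum_le_sum fun i _ => key σ hσ i
    linarith
  exact tendsto_atTop_mono' _ hbound (tendsto_atTop_add_const_right _ D hj_top)
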